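/- Injectivity of the Spatial Spherical Radon Transform on Spherical Trees (Theorem 4.3): Let d, d_θ, k ≥ 1, let h : 𝕊^d → 𝕊^{d_θ} be an injective continuous map, and let α be an O(d_θ+1)-invariant spherical splitting map on 𝕊^{d_θ} with k edges. Let μ, ν be finite Borel measures on 𝕊^d. If for every spherical tree 𝒯 = (x, y_1, …, y_k) with k edges in 𝕊^{d_θ} and every index i ∈ {1,…,k}, the pushforward under the map y ↦ arccos ⟪x, h(y)⟫ of the measure μ weighted with density y ↦ α(h(y),𝒯)_i equals the pushforward under y ↦ arccos ⟪x, h(y)⟫ of ν weighted with density y ↦ α(h(y),𝒯)_i, then μ = ν. -/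

import Mathlib

open MeasureTheory
open scoped InnerProductSpace

noncomputable section

/-- The unit sphere `𝕊^n ⊆ ℝ^{n+1}`. -/
abbrev USph (n : ℕ) := Metric.sphere (0 : EuclideanSpace ℝ (Fin (n + 1))) 1

/-- A spherical tree with `k` edges in `𝕊^n`: a root `x` together with `k` edge
directions `y_i`, all on the sphere, with `⟪x, y_i⟫ = 0`. -/
abbrev SphTree (n k : ℕ) :=
  {T : USph n × (Fin k → USph n) //
    ∀ i, ⟪(T.1 : EuclideanSpace ℝ (Fin (n + 1))),
      (T.2 i : EuclideanSpace ℝ (Fin (n + 1)))⟫_ℝ = 0}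

/-- The action of a linear isometry equivalence on the unit sphere. -/
def sphIso {n : ℕ} (Q : EuclideanSpace ℝ (Fin (n + 1)) ≃ₗᵢ[ℝ] EuclideanSpace ℝ (Fin (n + 1)))
    (z : USph n) : USph n :=
  ⟨Q (z : EuclideanSpace ℝ (Fin (n + 1))), by
    rw [mem_sphere_zero_iff_norm, Q.norm_map]
    exact mem_sphere_zero_iff_norm.mp z.2⟩

/-- The action of the orthogonal group `O(n+1)` on spherical trees. -/
def actTree {n k : ℕ} (Q : EuclideanSpace ℝ (Fin (n + 1)) ≃ₗᵢ[ℝ] EuclideanSpace ℝ (Fin (n + 1)))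
    (T : SphTree n k) : SphTree n k :=
  ⟨(sphIso Q T.1.1, fun i => sphIso Q (T.1.2 i)), by
    intro i
    simpa [sphIso, Q.inner_map_map] using T.2 i⟩

/-!
The weights `α(·, 𝒯)_i` form a partition of unity, so summing the hypothesis over `i` shows
that `μ` and `ν` have the same pushforward under `y ↦ arccos ⟪x, h y⟫` for every root `x`, and
hence, applying `cos`, under `y ↦ ⟪x, h y⟫`. Every unit vector of `ℝ^{dθ+1}` is a root, so the
pushforwards of `μ` and `ν` along `h` have the same one-dimensional projections, hence the same
characteristic function (Cramér–Wold). A continuous injection of the compact sphere is a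
measurable embedding, so `μ = ν`.
-/

theorem exists_norm_eq_one_inner_eq_zero {E : Type*} [NormedAddCommGroup E]
    [InnerProductSpace ℝ E] [FiniteDimensional ℝ E] (hE : 2 ≤ Module.finrank ℝ E) (x : E) :
    ∃ w : E, ‖w‖ = 1 ∧ ⟪x, w⟫_ℝ = 0 := by
  have hpos : 0 < Module.finrank ℝ (ℝ ∙ x)ᗮ := by
    have hspan : Module.finrank ℝ (ℝ ∙ x) ≤ 1 :=
      (finrank_span_le_card ({x} : Set E)).trans (by simp)
    have := (ℝ ∙ x).finrank_add_finrank_orthogonal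
    omega
  have := Module.finrank_pos_iff.mp hpos
  obtain ⟨w, hw⟩ := exists_norm_eq (ℝ ∙ x)ᗮ zero_le_one
  exact ⟨w, hw, Submodule.mem_orthogonal_singleton_iff_inner_right.mp w.2⟩

theorem exists_norm_eq_one_smul_eq {E : Type*} [NormedAddCommGroup E] [NormedSpace ℝ E]
    [Nontrivial E] (t : E) : ∃ (r : ℝ) (x : E), ‖x‖ = 1 ∧ r • x = t := by
  rcases eq_or_ne t 0 with rfl | ht
  · obtain ⟨x, hx⟩ := exists_norm_eq E zero_le_one
    exact ⟨0, x, hx, zero_smul ℝ x⟩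
  · exact ⟨‖t‖, ‖t‖⁻¹ • t, norm_smul_inv_norm ht, smul_inv_smul₀ (norm_ne_zero_iff.mpr ht) t⟩

theorem SphTree.exists_root_eq {n : ℕ} (k : ℕ) (hn : 1 ≤ n) (x : USph n) :
    ∃ T : SphTree n k, T.1.1 = x := by
  obtain ⟨w, hw, hxw⟩ :=
    exists_norm_eq_one_inner_eq_zero (by simp; omega) (x : EuclideanSpace ℝ (Fin (n + 1)))
  exact ⟨⟨(x, fun _ => ⟨w, mem_sphere_zero_iff_norm.mpr hw⟩), fun _ => hxw⟩, rfl⟩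

namespace MeasureTheory.Measure

variable {X Y : Type*} [MeasurableSpace X] [MeasurableSpace Y]

theorem map_eq_sum_map_withDensity {ι : Type*} [Fintype ι] (ρ : Measure X) {f : X → Y}
    (hf : Measurable f) {w : X → ι → ℝ} (hw : Measurable w)
    (hsimplex : ∀ x, w x ∈ stdSimplex ℝ ι) :
    ρ.map f = ∑ i, (ρ.withDensity fun x => ENNReal.ofReal (w x i)).map f := by
  have hdens : ∀ i, Measurable fun x => ENNReal.ofReal (w x i) :=
    fun i => ((measurable_pi_apply i).comp hw).ennreal_ofReal
  have hone : (∑' i, fun x => ENNReal.ofReal (w x i)) = 1 := by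
    ext x
    rw [ENNReal.tsum_apply, tsum_fintype,
      ← ENNReal.ofReal_sum_of_nonneg fun i _ => (hsimplex x).1 i, (hsimplex x).2]
    simp
  rw [← map_finset_sum' hf.aemeasurable, ← sum_fintype, ← withDensity_tsum hdens, hone,
    withDensity_one]

theorem map_cos_map_arccos (ρ : Measure X) {g : X → ℝ} (hg : Measurable g)
    (hg1 : ∀ x, g x ∈ Set.Icc (-1) 1) :
    (ρ.map fun x => Real.arccos (g x)).map Real.cos = ρ.map g := by
  rw [map_map (f := fun x => Real.arccos (g x)) Real.measurable_cos (by fun_prop)]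
  congr 1
  funext x
  exact Real.cos_arccos (hg1 x).1 (hg1 x).2

theorem ext_of_map_inner {E : Type*} [NormedAddCommGroup E] [InnerProductSpace ℝ E]
    [CompleteSpace E] [SecondCountableTopology E] [Nontrivial E] [MeasurableSpace E]
    [BorelSpace E] {σ τ : Measure E} [IsFiniteMeasure σ] [IsFiniteMeasure τ]
    (h : ∀ x : E, ‖x‖ = 1 → σ.map (fun z => ⟪x, z⟫_ℝ) = τ.map (fun z => ⟪x, z⟫_ℝ)) :
    σ = τ := by
  have charFun_smul : ∀ (ρ : Measure E) (r : ℝ) (x : E),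
      charFun ρ (r • x) = charFun (ρ.map fun z => ⟪x, z⟫_ℝ) r := by
    intro ρ r x
    rw [charFun_eq_charFunDual_toDualMap, map_smul, ← charFun_map_eq_charFunDual_smul]
    rfl
  refine ext_of_charFun (funext fun t => ?_)
  obtain ⟨r, x, hx, rfl⟩ := exists_norm_eq_one_smul_eq t
  rw [charFun_smul, charFun_smul, h x hx]

end MeasureTheory.Measure

theorem spatial_spherical_radon_transform_spherical_trees_injective_general
    (d dθ k : ℕ) (hdθ : 1 ≤ dθ)
    (h : USph d → USph dθ) (h_inj : Function.Injective h) (h_cont : Continuous h)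
    (α : USph dθ × SphTree dθ k → Fin k → ℝ)
    (hα_cont : Continuous α)
    (hα_simplex : ∀ p, α p ∈ stdSimplex ℝ (Fin k))
    (μ ν : Measure (USph d)) [IsFiniteMeasure μ] [IsFiniteMeasure ν]
    (heq : ∀ (T : SphTree dθ k) (i : Fin k),
      (μ.withDensity fun y => ENNReal.ofReal (α (h y, T) i)).map
          (fun y => Real.arccos ⟪(T.1.1 : EuclideanSpace ℝ (Fin (dθ + 1))),
            (h y : EuclideanSpace ℝ (Fin (dθ + 1)))⟫_ℝ)
        = (ν.withDensity fun y => ENNReal.ofReal (α (h y, T) i)).map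
          (fun y => Real.arccos ⟪(T.1.1 : EuclideanSpace ℝ (Fin (dθ + 1))),
            (h y : EuclideanSpace ℝ (Fin (dθ + 1)))⟫_ℝ)) :
    μ = ν := by
  set E := EuclideanSpace ℝ (Fin (dθ + 1))
  set H : USph d → E := fun y => h y
  have hH : Continuous H := continuous_subtype_val.comp h_cont
  have hproj : ∀ x : USph dθ,
      μ.map (fun y => ⟪(x : E), H y⟫_ℝ) = ν.map (fun y => ⟪(x : E), H y⟫_ℝ) := by
    intro x
    obtain ⟨T, rfl⟩ := SphTree.exists_root_eq k hdθ x
    have hinner : ∀ y, ⟪(T.1.1 : E), H y⟫_ℝ ∈ Set.Icc (-1) 1 := fun y => by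
      simpa [abs_le, norm_eq_of_mem_sphere, H] using abs_real_inner_le_norm (T.1.1 : E) (H y)
    have hweights : Measurable fun y => α (h y, T) :=
      (hα_cont.comp (h_cont.prodMk continuous_const)).measurable
    have hradon : μ.map (fun y => Real.arccos ⟪(T.1.1 : E), H y⟫_ℝ)
        = ν.map (fun y => Real.arccos ⟪(T.1.1 : E), H y⟫_ℝ) := by
      rw [Measure.map_eq_sum_map_withDensity μ (by fun_prop) hweights fun _ => hα_simplex _,
        Measure.map_eq_sum_map_withDensity ν (by fun_prop) hweights fun _ => hα_simplex _]
      exact Finset.sum_congr rfl fun i _ => heq T i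
    rw [← Measure.map_cos_map_arccos μ (by fun_prop) hinner,
      ← Measure.map_cos_map_arccos ν (by fun_prop) hinner, hradon]
  have hmap : μ.map H = ν.map H := by
    refine Measure.ext_of_map_inner fun x hx => ?_
    rw [Measure.map_map (by fun_prop) hH.measurable, Measure.map_map (by fun_prop) hH.measurable]
    exact hproj ⟨x, mem_sphere_zero_iff_norm.mpr hx⟩
  have hemb : MeasurableEmbedding H :=
    (hH.isClosedEmbedding (Subtype.val_injective.comp h_inj)).measurableEmbedding
  exact hemb.map_injective hmap

/-- Injectivity of the Spatial Spherical Radon Transform on Spherical Trees. -/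
theorem spatial_spherical_radon_transform_spherical_trees_injective
    (d dθ k : ℕ) (hd : 1 ≤ d) (hdθ : 1 ≤ dθ) (hk : 1 ≤ k)
    (h : USph d → USph dθ) (h_inj : Function.Injective h) (h_cont : Continuous h)
    (α : USph dθ × SphTree dθ k → Fin k → ℝ)
    (hα_cont : Continuous α)
    (hα_simplex : ∀ p, α p ∈ stdSimplex ℝ (Fin k))
    (hα_inv : ∀ (Q : EuclideanSpace ℝ (Fin (dθ + 1)) ≃ₗᵢ[ℝ] EuclideanSpace ℝ (Fin (dθ + 1)))
      (z : USph dθ) (T : SphTree dθ k),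
      α (sphIso Q z, actTree Q T) = α (z, T))
    (μ ν : Measure (USph d)) [IsFiniteMeasure μ] [IsFiniteMeasure ν]
    (heq : ∀ (T : SphTree dθ k) (i : Fin k),
      (μ.withDensity fun y => ENNReal.ofReal (α (h y, T) i)).map
          (fun y => Real.arccos ⟪(T.1.1 : EuclideanSpace ℝ (Fin (dθ + 1))),
            (h y : EuclideanSpace ℝ (Fin (dθ + 1)))⟫_ℝ)
        = (ν.withDensity fun y => ENNReal.ofReal (α (h y, T) i)).map
          (fun y => Real.arccos ⟪(T.1.1 : EuclideanSpace ℝ (Fin (dθ + 1))),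
            (h y : EuclideanSpace ℝ (Fin (dθ + 1)))⟫_ℝ)) :
    μ = ν :=
  spatial_spherical_radon_transform_spherical_trees_injective_general d dθ k hdθ h h_inj h_cont α
    hα_cont hα_simplex μ ν heq
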